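/- For real β with 0 ≤ β ≤ 1, real x ≤ 0, and real u > 0, the u-partial derivative of φ(β,u,x) := (β−x)/((β−x)²+u²) + (1−β−x)/((1−β−x)²+u²) satisfies (−2+4x)/u³ ≤ ∂φ/∂u(β,u,x) ≤ 0. -/

import Mathlib

/-!
Both summands of `φ` have the form `v ↦ a / (a ^ 2 + v ^ 2)` with `a ≥ 0`
(namely `a = β - x` and `a = 1 - β - x`). Its derivative `-2au / (a² + u²)²` is nonpositive
and, since `(a² + u²)² ≥ u⁴`, at least `-2a / u³`; the two lower bounds add up to
`(-2 + 4x) / u³`.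
-/

theorem hasDerivAt_div_sq_add_sq (a u : ℝ) :
    HasDerivAt (fun v : ℝ => a / (a ^ 2 + v ^ 2)) (-(2 * a * u) / (a ^ 2 + u ^ 2) ^ 2) u := by
  rcases eq_or_ne a 0 with rfl | ha
  · simpa using hasDerivAt_const u (0 : ℝ)
  have hden : HasDerivAt (fun v : ℝ => a ^ 2 + v ^ 2) (2 * u) u := by
    simpa using (hasDerivAt_pow 2 u).const_add (a ^ 2)
  exact ((hasDerivAt_const u a).fun_div hden (by positivity)).congr_deriv (by ring)

theorem neg_two_mul_div_sq_add_sq_sq_nonpos {a u : ℝ} (ha : 0 ≤ a) (hu : 0 ≤ u) :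
    -(2 * a * u) / (a ^ 2 + u ^ 2) ^ 2 ≤ 0 :=
  div_nonpos_of_nonpos_of_nonneg (neg_nonpos.mpr (by positivity)) (by positivity)

theorem neg_two_mul_div_pow_three_le {a u : ℝ} (ha : 0 ≤ a) (hu : 0 < u) :
    -(2 * a) / u ^ 3 ≤ -(2 * a * u) / (a ^ 2 + u ^ 2) ^ 2 :=
  calc -(2 * a) / u ^ 3 = -(2 * a * u / u ^ 4) := by field_simp
    _ ≤ -(2 * a * u / (a ^ 2 + u ^ 2) ^ 2) :=
      neg_le_neg <| div_le_div_of_nonneg_left (by positivity) (by positivity)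
        (by nlinarith [pow_nonneg (sq_nonneg a) 2, mul_nonneg (sq_nonneg a) (sq_nonneg u)])
    _ = -(2 * a * u) / (a ^ 2 + u ^ 2) ^ 2 := (neg_div _ _).symm

theorem phi_deriv_bounds (β x u : ℝ) (hβ0 : 0 ≤ β) (hβ1 : β ≤ 1) (hx : x ≤ 0) (hu : 0 < u) :
    (-2 + 4 * x) / u ^ 3
      ≤ deriv (fun v : ℝ =>
          (β - x) / ((β - x) ^ 2 + v ^ 2) + (1 - β - x) / ((1 - β - x) ^ 2 + v ^ 2)) u ∧
    deriv (fun v : ℝ =>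
        (β - x) / ((β - x) ^ 2 + v ^ 2) + (1 - β - x) / ((1 - β - x) ^ 2 + v ^ 2)) u ≤ 0 := by
  have ha : 0 ≤ β - x := by linarith
  have hb : 0 ≤ 1 - β - x := by linarith
  rw [((hasDerivAt_div_sq_add_sq (β - x) u).fun_add (hasDerivAt_div_sq_add_sq (1 - β - x) u)).deriv]
  have hsum : (-2 + 4 * x) / u ^ 3 = -(2 * (β - x)) / u ^ 3 + -(2 * (1 - β - x)) / u ^ 3 := by
    ring
  constructor
  · rw [hsum]
    exact add_le_add (neg_two_mul_div_pow_three_le ha hu) (neg_two_mul_div_pow_three_le hb hu)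
  · exact add_nonpos (neg_two_mul_div_sq_add_sq_sq_nonpos ha hu.le)
      (neg_two_mul_div_sq_add_sq_sq_nonpos hb hu.le)
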